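/- For every real number a with 1/2 < a < 2/π and every x > 0, one has arctan x < max{π/2, 1 + a}·x/(a + √(1 + x²)). -/

import Mathlib

/-!
Put `q = π / 2` and `s = √(1 + x²)`. For `s ≥ 1` one has `q / (q - 1 + s) ≤ max q (1 + a) / (a + s)`
(compare `a` with `q - 1`), so everything rests on the case `a = q - 1`:
`arctan x < q x / (q - 1 + s)`.

For `x ≤ 4/5` this follows from the alternating Taylor bound
`arctan x < x - x³/3 + ⋯ + x¹³/13` and `√(1 + u) ≤ 1 + u/2 - u²/8 + u³/16`, which leave a polynomial
inequality in `u = x²`. For `x ≥ 4/5` write `arctan x = q - arctan (1/x)` and use Shafer's bound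
`arctan y > 3y / (1 + 2√(1 + y²))`. Since `(s - x)(s + x) = 1`, the resulting inequality becomes the
positivity of a cubic in `t = s - x ≤ 0.4807`. The cubic vanishes near `t = 0.488`, barely beyond
the value `t ≈ 0.4806` at `x = 4/5`; this is why six digits of `π` are needed.
-/

open Real Finset

lemma lt_of_hasDerivAt_lt {f g f' g' : ℝ → ℝ} {a x : ℝ}
    (hf : ∀ y, HasDerivAt f (f' y) y) (hg : ∀ y, HasDerivAt g (g' y) y)
    (ha : f a = g a) (hderiv : ∀ y, a < y → f' y < g' y) (hx : a < x) : f x < g x := by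
  have hmono : StrictMonoOn (g - f) (Set.Ici a) := by
    refine strictMonoOn_of_deriv_pos (convex_Ici a) ?_ fun y hy ↦ ?_
    · exact fun y _ ↦ ((hg y).sub (hf y)).continuousAt.continuousWithinAt
    · rw [interior_Ici] at hy
      rw [((hg y).sub (hf y)).deriv]
      exact sub_pos.2 (hderiv y hy)
  have := hmono Set.self_mem_Ici hx.le hx
  simp only [Pi.sub_apply, ha, sub_self] at this
  exact sub_pos.1 this

lemma hasDerivAt_sqrt_one_add_sq (y : ℝ) :
    HasDerivAt (fun x ↦ √(1 + x ^ 2)) (y / √(1 + y ^ 2)) y := by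
  have h := ((hasDerivAt_pow 2 y).const_add 1).sqrt (by positivity)
  convert h using 1
  field_simp
  ring

lemma one_lt_sqrt_one_add_sq {x : ℝ} (hx : x ≠ 0) : 1 < √(1 + x ^ 2) := by
  rw [lt_sqrt zero_le_one]
  have := pow_pos (abs_pos.2 hx) 2
  simp only [sq_abs] at this
  linarith

lemma arctan_lt_sum_range {x : ℝ} (hx : 0 < x) {m : ℕ} (hm : Even m) :
    arctan x < ∑ k ∈ range (m + 1), (-1) ^ k * x ^ (2 * k + 1) / (2 * k + 1) := by
  refine lt_of_hasDerivAt_lt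
    (g := fun x ↦ ∑ k ∈ range (m + 1), (-1) ^ k * x ^ (2 * k + 1) / (2 * k + 1))
    (g' := fun y ↦ ∑ k ∈ range (m + 1), (-y ^ 2) ^ k)
    hasDerivAt_arctan (fun y ↦ HasDerivAt.fun_sum fun k _ ↦ ?_) (by simp) (fun y hy ↦ ?_) hx
  · refine (((hasDerivAt_pow (2 * k + 1) y).const_mul ((-1 : ℝ) ^ k)).div_const
      (2 * k + 1)).congr_deriv ?_
    push_cast
    rw [neg_pow (y ^ 2), ← pow_mul]
    field_simp
  · -- `m + 1` is odd, so the geometric sum is `(1 + y ^ (2 (m + 1))) / (1 + y ^ 2)`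
    have hy2 : 0 < 1 + y ^ 2 := by positivity
    rw [geom_sum_eq (by nlinarith), (hm.add_one).neg_pow, ← pow_mul,
      show -y ^ (2 * (m + 1)) - 1 = -(1 + y ^ (2 * (m + 1))) by ring,
      show -y ^ 2 - 1 = -(1 + y ^ 2) by ring, neg_div_neg_eq]
    gcongr
    linarith [pow_pos hy (2 * (m + 1))]

lemma sqrt_one_add_le {u : ℝ} (hu : 0 ≤ u) :
    √(1 + u) ≤ 1 + u / 2 - u ^ 2 / 8 + u ^ 3 / 16 := by
  rw [sqrt_le_left (by nlinarith [sq_nonneg (u - 2)])]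
  nlinarith [pow_nonneg hu 4, mul_nonneg (pow_nonneg hu 4) (sq_nonneg (u - 2))]

lemma arctan_series_mul_le {q u : ℝ} (hq : 1.570796 ≤ q) (hu0 : 0 ≤ u) (hu : u ≤ 16 / 25) :
    (1 - u / 3 + u ^ 2 / 5 - u ^ 3 / 7 + u ^ 4 / 9 - u ^ 5 / 11 + u ^ 6 / 13) *
      (q + u / 2 - u ^ 2 / 8 + u ^ 3 / 16) ≤ q := by
  -- with `A`, `B`, `C` the polynomials of `hpoly`, `1 - A = u C`, so the claim is `u (q C - A B) ≥ 0`
  have hu' : 0 ≤ 16 / 25 - u := by linarith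
  have hC : 0 ≤ 1/3 - u/5 + u^2/7 - u^3/9 + u^4/11 - u^5/13 := by
    nlinarith [mul_nonneg hu0 hu', mul_nonneg (pow_nonneg hu0 3) hu', mul_nonneg (pow_nonneg hu0 2) hu']
  have hpoly : (1 - u/3 + u^2/5 - u^3/7 + u^4/9 - u^5/11 + u^6/13) * (1/2 - u/8 + u^2/16)
      ≤ 1.570796 * (1/3 - u/5 + u^2/7 - u^3/9 + u^4/11 - u^5/13) := by
    nlinarith [mul_nonneg hu0 hu0, mul_nonneg (mul_nonneg hu0 hu0) hu0,
      mul_nonneg hu' hu0, mul_nonneg (mul_nonneg hu' hu0) hu0,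
      mul_nonneg (mul_nonneg (mul_nonneg hu' hu0) hu0) hu0,
      sq_nonneg (u - 16/25), sq_nonneg u,
      mul_nonneg (mul_nonneg (mul_nonneg (mul_nonneg hu' hu0) hu0) hu0) hu0,
      mul_nonneg (mul_nonneg (mul_nonneg (mul_nonneg (mul_nonneg hu' hu0) hu0) hu0) hu0) hu0]
  nlinarith [mul_nonneg hu0 (sub_nonneg.2 hpoly), mul_nonneg hu0 (mul_nonneg (sub_nonneg.2 hq) hC)]

lemma arctan_mul_lt_of_le_four_fifths {x : ℝ} (hx0 : 0 < x) (hx : x ≤ 4 / 5) :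
    arctan x * (π / 2 - 1 + √(1 + x ^ 2)) < π / 2 * x := by
  have hseries : arctan x < x * (1 - x ^ 2 / 3 + (x ^ 2) ^ 2 / 5 - (x ^ 2) ^ 3 / 7 +
      (x ^ 2) ^ 4 / 9 - (x ^ 2) ^ 5 / 11 + (x ^ 2) ^ 6 / 13) := by
    convert arctan_lt_sum_range hx0 (by decide : Even 6) using 1
    simp only [sum_range_succ, sum_range_zero]
    norm_num
    ring
  have hsqrt := sqrt_one_add_le (sq_nonneg x)
  have hq : 1.570796 ≤ π / 2 := by linarith [pi_gt_d6]
  have hbound := arctan_series_mul_le hq (sq_nonneg x) (by nlinarith)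
  have harctan := arctan_pos.2 hx0
  calc arctan x * (π / 2 - 1 + √(1 + x ^ 2))
      < x * (1 - x ^ 2 / 3 + (x ^ 2) ^ 2 / 5 - (x ^ 2) ^ 3 / 7 + (x ^ 2) ^ 4 / 9 -
          (x ^ 2) ^ 5 / 11 + (x ^ 2) ^ 6 / 13) *
          (π / 2 - 1 + (1 + x ^ 2 / 2 - (x ^ 2) ^ 2 / 8 + (x ^ 2) ^ 3 / 16)) :=
        mul_lt_mul hseries (by linarith) (by linarith [one_lt_sqrt_one_add_sq hx0.ne'])
          (by linarith)
    _ ≤ π / 2 * x := by nlinarith [mul_le_mul_of_nonneg_left hbound hx0.le]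

lemma three_mul_div_lt_arctan {x : ℝ} (hx : 0 < x) :
    3 * x / (1 + 2 * √(1 + x ^ 2)) < arctan x := by
  refine lt_of_hasDerivAt_lt (fun y ↦ ((hasDerivAt_id' y).const_mul 3).div
      (((hasDerivAt_sqrt_one_add_sq y).const_mul 2).const_add 1) (by positivity))
    hasDerivAt_arctan (by simp) (fun y hy ↦ ?_) hx
  have hs1 := one_lt_sqrt_one_add_sq hy.ne'
  have hs := sq_sqrt (by positivity : 0 ≤ 1 + y ^ 2)
  set s := √(1 + y ^ 2)
  rw [← hs]
  -- the difference of the derivatives is `(s - 1) ^ 2 / (s ^ 2 * (1 + 2 s) ^ 2)`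
  rw [div_lt_div_iff₀ (by positivity) (by positivity)]
  field_simp
  nlinarith [hs, mul_pos (by linarith : 0 < s) (pow_pos (by linarith : 0 < s - 1) 2)]

lemma arctan_lt_pi_div_two_sub {x : ℝ} (hx : 0 < x) :
    arctan x < π / 2 - 3 / (x + 2 * √(1 + x ^ 2)) := by
  have hshafer := three_mul_div_lt_arctan (inv_pos.2 hx)
  have hsqrt : √(1 + x⁻¹ ^ 2) = √(1 + x ^ 2) / x := by
    rw [show 1 + x⁻¹ ^ 2 = (1 + x ^ 2) / x ^ 2 by field_simp; ring, sqrt_div' _ (sq_nonneg x),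
      sqrt_sq hx.le]
  rw [hsqrt, show 3 * x⁻¹ / (1 + 2 * (√(1 + x ^ 2) / x)) = 3 / (x + 2 * √(1 + x ^ 2)) by
    field_simp] at hshafer
  linarith [arctan_inv_of_pos hx]

lemma sqrt_one_add_sq_sub_le {x : ℝ} (hx : 4 / 5 ≤ x) : √(1 + x ^ 2) - x ≤ 0.4807 := by
  have hs := sq_sqrt (by positivity : 0 ≤ 1 + x ^ 2)
  have hs0 := sqrt_nonneg (1 + x ^ 2)
  set s := √(1 + x ^ 2)
  have hsl : 1.2806 ≤ s := by nlinarith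
  nlinarith

lemma arctan_mul_lt_of_four_fifths_le {x : ℝ} (hx : 4 / 5 ≤ x) :
    arctan x * (π / 2 - 1 + √(1 + x ^ 2)) < π / 2 * x := by
  have hs := sq_sqrt (by positivity : 0 ≤ 1 + x ^ 2)
  have hs1 := one_lt_sqrt_one_add_sq (by positivity : x ≠ 0)
  have ht := sqrt_one_add_sq_sub_le hx
  have harctan := arctan_lt_pi_div_two_sub (by positivity : 0 < x)
  have hq1 : 1.570796 < π / 2 := by linarith [pi_gt_d6]
  have hq2 : π / 2 < 1.5707965 := by linarith [pi_lt_d6]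
  set s := √(1 + x ^ 2)
  set q := π / 2
  have ht0 : 0 < s - x := by nlinarith
  have hkey : q * (q - 1 + s - x) * (x + 2 * s) < 3 * (q - 1 + s) := by
    -- `(s - x) (s + x) = 1`: multiplying by `2 (s - x)` leaves a cubic in `s - x`
    have hid : 2 * (s - x) * (3 * (q - 1 + s) - q * (q - 1 + s - x) * (x + 2 * s)) =
        -q * (s - x) ^ 3 + (3 + q - q ^ 2) * (s - x) ^ 2 + 3 * (q - 2) * (s - x) +
          3 * (1 + q - q ^ 2) := by
      linear_combination (3 + 3 * q - 3 * q ^ 2 - 3 * q * (s - x)) * hs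
    have hcubic : 0 < -q * (s - x) ^ 3 + (3 + q - q ^ 2) * (s - x) ^ 2 + 3 * (q - 2) * (s - x) +
        3 * (1 + q - q ^ 2) := by
      have ht' : 0 ≤ 0.4807 - (s - x) := by linarith
      have hq : 0 < 1.5707965 - q := by linarith
      nlinarith [mul_nonneg (mul_nonneg ht' ht0.le) ht0.le, mul_nonneg (mul_nonneg ht' ht') ht0.le,
        mul_nonneg ht' ht0.le, mul_pos hq (pow_pos ht0 3), mul_pos hq (by linarith : 0 < q + 1.5707965),
        mul_pos (sub_pos.2 hq1) ht0]
    have := pos_of_mul_pos_right (hid ▸ hcubic) (by positivity)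
    linarith
  have hkey' : q * (q - 1 + s - x) < 3 * (q - 1 + s) / (x + 2 * s) :=
    (lt_div_iff₀ (by positivity)).2 hkey
  calc arctan x * (q - 1 + s) < (q - 3 / (x + 2 * s)) * (q - 1 + s) := by
        gcongr
        linarith
    _ = q * (q - 1 + s) - 3 * (q - 1 + s) / (x + 2 * s) := by ring
    _ < q * x := by linarith

lemma arctan_lt_pi_div_two_mul_div {x : ℝ} (hx : 0 < x) :
    arctan x < π / 2 * x / (π / 2 - 1 + √(1 + x ^ 2)) := by
  have hs := one_lt_sqrt_one_add_sq hx.ne'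
  rw [lt_div_iff₀ (by linarith [pi_gt_three])]
  rcases le_total x (4 / 5) with hsmall | hlarge
  · exact arctan_mul_lt_of_le_four_fifths hx hsmall
  · exact arctan_mul_lt_of_four_fifths_le hlarge

lemma div_sub_one_add_le_max_div {a b s : ℝ} (ha : -1 < a) (hb : 0 < b) (hs : 1 ≤ s) :
    b / (b - 1 + s) ≤ max b (1 + a) / (a + s) := by
  rw [div_le_div_iff₀ (by linarith) (by linarith)]
  rcases le_total a (b - 1) with hab | hab
  · nlinarith [le_max_left b (1 + a)]
  · nlinarith [le_max_right b (1 + a), mul_nonneg (sub_nonneg.2 hab) (sub_nonneg.2 hs)]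

theorem arctan_lt_max_of_mem_Ioo_general (a : ℝ) (ha1 : 1 / 2 < a)
    (x : ℝ) (hx : 0 < x) :
    Real.arctan x < max (Real.pi / 2) (1 + a) * x / (a + Real.sqrt (1 + x ^ 2)) := by
  have hs := one_lt_sqrt_one_add_sq hx.ne'
  calc arctan x < π / 2 * x / (π / 2 - 1 + √(1 + x ^ 2)) := arctan_lt_pi_div_two_mul_div hx
    _ = π / 2 / (π / 2 - 1 + √(1 + x ^ 2)) * x := by ring
    _ ≤ max (π / 2) (1 + a) / (a + √(1 + x ^ 2)) * x := by
        gcongr ?_ * x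
        exact div_sub_one_add_le_max_div (by linarith) (by positivity) hs.le
    _ = max (π / 2) (1 + a) * x / (a + √(1 + x ^ 2)) := by ring

theorem arctan_lt_max_of_mem_Ioo (a : ℝ) (ha1 : 1 / 2 < a) (ha2 : a < 2 / Real.pi)
    (x : ℝ) (hx : 0 < x) :
    Real.arctan x < max (Real.pi / 2) (1 + a) * x / (a + Real.sqrt (1 + x ^ 2)) :=
  arctan_lt_max_of_mem_Ioo_general a ha1 x hx
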